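/- Let (R, m, k) be an Artinian Gorenstein local ring with m^2 = x·m, µ(m^2) = m ≥ 2, embedding dimension n, with minimal generators x = x_1, x_2, ..., x_n of m chosen so that x_1·x_j = 0 for m+1 ≤ j ≤ n. Then the pairing (x_2,...,x_m)/m(x_2,...,x_m) × ((0:_R x_1) ∩ m^2)/m((0:_R x_1) ∩ m^2) → soc(R) induced by multiplication is well-defined and non-degenerate. -/

import Mathlib

/-!
Write `x₀ = x 0` (the paper's `x₁`), `A = (x i : 0 < i < m)` and `B = (0 : x₀) ∩ m²`. Since
`m² = x₀m` and `x₀B = 0`, we have `m²B = 0`, so the pairing is well defined. The `m` products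
`x₀x_i` with `i < m` generate `m²` (the others vanish), and since `µ(m²) = m` they do so minimally:
every relation among them has all its coefficients in `m`.

If `a ∈ A` kills `B`, then `a` kills `x₀r` for every `r ∈ (0 : x₀²)`, because such an `r` lies in
`m` (as `x₀² ≠ 0`) and so `x₀r ∈ B`. Gorenstein duality `(0 : (0 : I)) = I` turns this into
`x₀a ∈ (x₀²)`, and minimality puts every coefficient of `a` into `m`, i.e. `a ∈ mA`. If `b ∈ B`
kills `A`, then `b` kills every `x_i`, so it lies in the socle, which is contained in every nonzero
ideal; and `mB ≠ 0`, since otherwise some `x_i` with `0 < i < m` would kill `B`, giving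
`x₀x_i ∈ (x₀²)` against minimality.

Duality is a length count in the lattice of ideals: passing from `C` to `C + (a)` with `ma ⊆ C`
shrinks `(0 : C)` by at most one step, because `t ↦ ta` maps `(0 : C)` into the simple socle.
Along the chains `0 ⊆ I` and `I ⊆ R` this gives `ℓ(0 : I) + ℓ(I) = ℓ(R)`, so the ideals
`I ⊆ (0 : (0 : I))` have the same length.
-/

open IsLocalRing

/-- `mu I` is the minimal number of generators of the ideal `I`. -/
noncomputable def mu {R : Type*} [CommRing R] (I : Ideal R) : ℕ :=
  sInf {n | ∃ s : Finset R, s.card = n ∧ Ideal.span (s : Set R) = I}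

open Submodule

theorem Ideal.le_annihilator_annihilator {R : Type*} [CommRing R] (I : Ideal R) :
    I ≤ I.annihilator.annihilator := by
  intro a ha
  rw [mem_annihilator]
  intro r hr
  rw [smul_eq_mul, mul_comm]
  exact mem_annihilator.mp hr a ha

section LocalRing

variable {R : Type*} [CommRing R] [IsLocalRing R]

theorem Ideal.covBy_sup_span_singleton {J : Ideal R} {t : R} (ht : t ∉ J)
    (hmt : ∀ y ∈ maximalIdeal R, y * t ∈ J) : J ⋖ J ⊔ Ideal.span {t} := by
  refine ⟨left_lt_sup.mpr (by rwa [Ideal.span_singleton_le_iff_mem]), fun D hJD hDt => ?_⟩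
  obtain ⟨d, hdD, hdJ⟩ := SetLike.exists_of_lt hJD
  obtain ⟨u, hu, v, hv, rfl⟩ := mem_sup.mp (hDt.le hdD)
  obtain ⟨r, rfl⟩ := Ideal.mem_span_singleton'.mp hv
  have hr : IsUnit r := by
    by_contra hr
    exact hdJ (J.add_mem hu (hmt r ((mem_maximalIdeal r).mpr hr)))
  have htD : t ∈ D := by
    have hrt : r * t ∈ D := by simpa using D.sub_mem hdD (hJD.le hu)
    simpa [← mul_assoc] using D.mul_mem_left (↑hr.unit⁻¹) hrt
  exact hDt.not_ge (sup_le hJD.le ((Ideal.span_singleton_le_iff_mem _).mpr htD))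

theorem Ideal.height_eq_of_covBy {p q : Ideal R} (h : p ⋖ q) :
    Order.height q = Order.height p + 1 := by
  have := h.length_restrictScalars R
  rw [Module.length_submodule, Module.length_submodule] at this
  convert this
  exact (Module.length_eq_one (R := IsLocalRing.ResidueField R)
    (M := IsLocalRing.ResidueField R)).symm

theorem Ideal.height_sup_span_singleton_le {J : Ideal R} {t : R}
    (hmt : ∀ y ∈ maximalIdeal R, y * t ∈ J) :
    Order.height (J ⊔ Ideal.span {t}) ≤ Order.height J + 1 := by
  by_cases ht : t ∈ J
  · rw [sup_eq_left.mpr ((Ideal.span_singleton_le_iff_mem _).mpr ht)]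
    exact le_self_add
  · exact (height_eq_of_covBy (covBy_sup_span_singleton ht hmt)).le

theorem Ideal.height_annihilator_le_height_annihilator_sup_add_one {z : R}
    (hsoc : (maximalIdeal R).annihilator = Ideal.span {z}) {C : Ideal R} {a : R}
    (ha : ∀ y ∈ maximalIdeal R, y * a ∈ C) :
    Order.height C.annihilator ≤ Order.height (C ⊔ Ideal.span {a}).annihilator + 1 := by
  set T := (C ⊔ Ideal.span {a}).annihilator
  have hmemT : ∀ t, t ∈ T ↔ t ∈ C.annihilator ∧ t * a = 0 := by
    intro t
    simp only [T, annihilator_sup, Submodule.mem_inf, mem_annihilator_span_singleton, smul_eq_mul]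
  by_cases hle : C.annihilator ≤ T
  · exact (Order.height_mono hle).trans le_self_add
  obtain ⟨t, htC, htT⟩ := SetLike.not_le_iff_exists.mp hle
  have hsocle : ∀ t' ∈ C.annihilator, t' * a ∈ Ideal.span {z} := by
    intro t' ht'
    rw [← hsoc, mem_annihilator]
    intro y hy
    rw [smul_eq_mul, mul_assoc, mul_comm a]
    exact mem_annihilator.mp ht' _ (ha y hy)
  obtain ⟨α, hα⟩ := Ideal.mem_span_singleton'.mp (hsocle t htC)
  have hαu : IsUnit α := by
    by_contra hα'
    have hz : z ∈ (maximalIdeal R).annihilator := hsoc ▸ Ideal.mem_span_singleton_self z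
    refine htT ((hmemT t).mpr ⟨htC, ?_⟩)
    rw [← hα, mul_comm]
    exact mem_annihilator.mp hz α ((mem_maximalIdeal α).mpr hα')
  have hCT : C.annihilator ≤ T ⊔ Ideal.span {t} := by
    intro t' ht'
    obtain ⟨β, hβ⟩ := Ideal.mem_span_singleton'.mp (hsocle t' ht')
    have hcoef : β * ↑hαu.unit⁻¹ * t ∈ Ideal.span {t} := Ideal.mem_span_singleton'.mpr ⟨_, rfl⟩
    refine mem_sup.mpr ⟨t' - β * ↑hαu.unit⁻¹ * t, (hmemT _).mpr ⟨?_, ?_⟩, _, hcoef, by ring⟩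
    · exact sub_mem ht' (Ideal.mul_mem_left _ _ htC)
    · have hinv : (↑hαu.unit⁻¹ : R) * α = 1 := hαu.val_inv_mul
      linear_combination -hβ + β * ↑hαu.unit⁻¹ * hα - β * z * hinv
  have hmt : ∀ y ∈ maximalIdeal R, y * t ∈ T := by
    intro y hy
    refine (hmemT _).mpr ⟨Ideal.mul_mem_left _ _ htC, ?_⟩
    rw [mul_right_comm, mul_comm]
    simpa [smul_eq_mul] using mem_annihilator.mp htC _ (ha y hy)
  exact (Order.height_mono hCT).trans (height_sup_span_singleton_le hmt)

end LocalRing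

section Artinian

variable {R : Type*} [CommRing R] [IsLocalRing R] [IsArtinianRing R]

theorem Ideal.exists_mem_forall_mul_mem_of_lt {C T : Ideal R} (h : C < T) :
    ∃ a ∈ T, a ∉ C ∧ ∀ y ∈ maximalIdeal R, y * a ∈ C := by
  obtain ⟨k, hk⟩ := (isArtinianRing_iff_isNilpotent_maximalIdeal R).mp ‹_›
  suffices ∀ j, maximalIdeal R ^ j * T ≤ C → ∃ a ∈ T, a ∉ C ∧ ∀ y ∈ maximalIdeal R, y * a ∈ C from
    this k (by simp [hk])
  intro j
  induction j with
  | zero =>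
    intro hj
    rw [pow_zero, one_mul] at hj
    exact absurd hj h.not_ge
  | succ j ih =>
    intro hj
    by_cases hjC : maximalIdeal R ^ j * T ≤ C
    · exact ih hjC
    obtain ⟨a, ha, haC⟩ := SetLike.not_le_iff_exists.mp hjC
    refine ⟨a, Ideal.mul_le_right (I := maximalIdeal R ^ j) ha, haC, fun y hy => hj ?_⟩
    rw [pow_succ', mul_assoc]
    exact Ideal.mul_mem_mul hy ha

theorem Ideal.height_annihilator_add_height_le {z : R}
    (hsoc : (maximalIdeal R).annihilator = Ideal.span {z}) {C T : Ideal R} (h : C ≤ T) :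
    Order.height C.annihilator + Order.height C ≤ Order.height T.annihilator + Order.height T := by
  induction C using WellFoundedGT.induction with
  | _ C ih =>
    rcases h.eq_or_lt with rfl | hlt
    · rfl
    obtain ⟨a, haT, haC, ha⟩ := exists_mem_forall_mul_mem_of_lt hlt
    have hlt' : C < C ⊔ Ideal.span {a} :=
      left_lt_sup.mpr (by rwa [Ideal.span_singleton_le_iff_mem])
    calc Order.height C.annihilator + Order.height C
        ≤ Order.height (C ⊔ Ideal.span {a}).annihilator + 1 + Order.height C := by
          gcongr
          exact height_annihilator_le_height_annihilator_sup_add_one hsoc ha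
      _ = Order.height (C ⊔ Ideal.span {a}).annihilator + (Order.height C + 1) := by ring
      _ ≤ Order.height (C ⊔ Ideal.span {a}).annihilator + Order.height (C ⊔ Ideal.span {a}) := by
          gcongr
          exact Order.height_add_one_le hlt'
      _ ≤ Order.height T.annihilator + Order.height T :=
          ih _ hlt' (sup_le h ((Ideal.span_singleton_le_iff_mem _).mpr haT))

theorem Ideal.annihilator_annihilator_eq {z : R}
    (hsoc : (maximalIdeal R).annihilator = Ideal.span {z}) (I : Ideal R) :
    I.annihilator.annihilator = I := by
  have hupper := height_annihilator_add_height_le hsoc (le_top : I.annihilator ≤ ⊤)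
  have hlower := height_annihilator_add_height_le hsoc (bot_le : ⊥ ≤ I)
  have htop : (⊤ : Ideal R).annihilator = ⊥ := by
    rw [annihilator_top, Module.annihilator_eq_bot]
    infer_instance
  simp only [annihilator_bot, htop, Order.height_bot, zero_add, add_zero] at hupper hlower
  rw [add_comm] at hupper
  have hle : Order.height I.annihilator.annihilator ≤ Order.height I :=
    (ENat.add_le_add_iff_left (Submodule.height_lt_top _).ne).mp (hupper.trans hlower)
  refine le_antisymm ?_ I.le_annihilator_annihilator
  by_contra hne
  exact (Submodule.height_strictMono (lt_of_le_not_ge I.le_annihilator_annihilator hne)).not_ge hle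

theorem Ideal.annihilator_maximalIdeal_le {z : R}
    (hsoc : (maximalIdeal R).annihilator = Ideal.span {z}) {I : Ideal R} (hI : I ≠ ⊥) :
    (maximalIdeal R).annihilator ≤ I := by
  obtain ⟨a, haI, ha0, ha⟩ := exists_mem_forall_mul_mem_of_lt (bot_lt_iff_ne_bot.mpr hI)
  have hasoc : a ∈ Ideal.span {z} := by
    rw [← hsoc, mem_annihilator]
    intro y hy
    rw [smul_eq_mul, mul_comm]
    exact ha y hy
  obtain ⟨r, rfl⟩ := Ideal.mem_span_singleton'.mp hasoc
  have hr : IsUnit r := by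
    by_contra hr
    have hz : z ∈ (maximalIdeal R).annihilator := hsoc ▸ Ideal.mem_span_singleton_self z
    rw [mul_comm] at ha0
    exact ha0 (mem_annihilator.mp hz r ((mem_maximalIdeal r).mpr hr))
  rw [hsoc, Ideal.span_singleton_le_iff_mem]
  simpa [← mul_assoc] using I.mul_mem_left (↑hr.unit⁻¹) haI

end Artinian

theorem mu_span_image_le_card {R ι : Type*} [CommRing R] (g : ι → R) (s : Finset ι) :
    mu (Ideal.span (g '' s)) ≤ s.card := by
  classical
  rw [← Finset.coe_image, mu]
  exact le_trans (Nat.sInf_le ⟨s.image g, rfl, rfl⟩) Finset.card_image_le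

theorem Ideal.mem_mul_span_of_forall_coeff_mem {R ι : Type*} [CommRing R] {P J : Ideal R}
    {v : ι → R} {s : Finset ι}
    (h : ∀ d : ι → R, ∑ i ∈ s, d i * v i ∈ J → ∀ i ∈ s, d i ∈ P) {a : R}
    (ha : a ∈ Ideal.span (v '' s)) (haJ : a ∈ J) : a ∈ P * Ideal.span (v '' s) := by
  obtain ⟨d, rfl⟩ := (Submodule.mem_span_image_finset_iff_exists_fun' R).mp ha
  simp only [smul_eq_mul] at haJ ⊢
  exact Ideal.sum_mem _ fun i hi =>
    Ideal.mul_mem_mul (h d haJ i hi) (Ideal.subset_span ⟨i, hi, rfl⟩)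

section MinimalGenerators

variable {R ι : Type*} [CommRing R] [IsLocalRing R] {g : ι → R}

theorem coeff_mem_maximalIdeal_of_card_le_mu {s : Finset ι}
    (hs : s.card ≤ mu (Ideal.span (g '' s))) {c : ι → R} (hc : ∑ i ∈ s, c i * g i = 0)
    {i : ι} (hi : i ∈ s) : c i ∈ maximalIdeal R := by
  classical
  by_contra hci
  have hu : IsUnit (c i) := notMem_maximalIdeal.mp hci
  have hgi : g i ∈ Ideal.span (g '' ↑(s.erase i)) := by
    have hrest : c i * g i = -∑ j ∈ s.erase i, c j * g j := by
      rw [← Finset.add_sum_erase s _ hi] at hc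
      linear_combination hc
    have hgi_eq : g i = ↑hu.unit⁻¹ * (c i * g i) := by simp [← mul_assoc]
    rw [hgi_eq, hrest]
    exact Ideal.mul_mem_left _ _ (neg_mem (Ideal.sum_mem _ fun j hj =>
      Ideal.mul_mem_left _ _ (Ideal.subset_span ⟨j, hj, rfl⟩)))
  have hspan : Ideal.span (g '' s) = Ideal.span (g '' ↑(s.erase i)) := by
    refine le_antisymm (Ideal.span_le.mpr ?_)
      (Ideal.span_mono (Set.image_mono (Finset.erase_subset _ _)))
    rintro _ ⟨j, hj, rfl⟩
    by_cases hji : j = i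
    · exact hji ▸ hgi
    · exact Ideal.subset_span ⟨j, Finset.mem_erase.mpr ⟨hji, hj⟩, rfl⟩
  have hmu := mu_span_image_le_card g (s.erase i)
  rw [← hspan, Finset.card_erase_of_mem hi] at hmu
  have := Finset.card_pos.mpr ⟨i, hi⟩
  omega

theorem ne_zero_of_card_le_mu {s : Finset ι} (hs : s.card ≤ mu (Ideal.span (g '' s)))
    {i : ι} (hi : i ∈ s) : g i ≠ 0 := by
  classical
  intro hgi
  have := coeff_mem_maximalIdeal_of_card_le_mu hs (c := Pi.single i 1)
    (by simp [Pi.single_apply, hi, hgi]) hi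
  simp at this

theorem coeff_mem_maximalIdeal_of_sum_mem_span_singleton [DecidableEq ι] {i₀ : ι}
    {s : Finset ι} (hi₀ : i₀ ∉ s)
    (hs : (insert i₀ s).card ≤ mu (Ideal.span (g '' ↑(insert i₀ s))))
    {c : ι → R} (hc : ∑ i ∈ s, c i * g i ∈ Ideal.span {g i₀}) {i : ι} (hi : i ∈ s) :
    c i ∈ maximalIdeal R := by
  obtain ⟨w, hw⟩ := Ideal.mem_span_singleton'.mp hc
  have hne : ∀ j ∈ s, j ≠ i₀ := fun j hj hji => hi₀ (hji ▸ hj)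
  have := coeff_mem_maximalIdeal_of_card_le_mu hs (c := Function.update c i₀ (-w)) ?_
    (Finset.mem_insert_of_mem hi)
  · rwa [Function.update_of_ne (hne i hi)] at this
  · rw [Finset.sum_insert hi₀, Function.update_self,
      Finset.sum_congr rfl fun j hj => by rw [Function.update_of_ne (hne j hj)], ← hw]
    ring

theorem coeff_mem_maximalIdeal_of_sum_mem_colon [DecidableEq ι] {y : R} {v : ι → R} {i₀ : ι}
    {s : Finset ι} (hi₀ : i₀ ∉ s)
    (hs : (insert i₀ s).card ≤ mu (Ideal.span ((y * v ·) '' ↑(insert i₀ s))))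
    {c : ι → R} (hc : ∑ i ∈ s, c i * v i ∈ (Ideal.span {y * v i₀}).colon {y}) {i : ι}
    (hi : i ∈ s) : c i ∈ maximalIdeal R := by
  refine coeff_mem_maximalIdeal_of_sum_mem_span_singleton hi₀ hs ?_ hi
  rw [mem_colon_singleton, smul_eq_mul, Finset.sum_mul] at hc
  simpa only [mul_left_comm y, mul_comm _ y] using hc

end MinimalGenerators

section Pairing

variable {R : Type*} [CommRing R] [IsLocalRing R]

theorem sq_maximalIdeal_eq_span_image {ι : Type*} {x : ι → R} {x₀ : R} {s : Set ι}
    (hspan : Ideal.span (Set.range x) = maximalIdeal R)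
    (hxm : maximalIdeal R ^ 2 = Ideal.span {x₀} * maximalIdeal R)
    (hzero : ∀ j ∉ s, x₀ * x j = 0) :
    maximalIdeal R ^ 2 = Ideal.span ((x₀ * x ·) '' s) := by
  refine le_antisymm ?_ (Ideal.span_le.mpr ?_)
  · rw [hxm, ← hspan, Ideal.span_mul_span', Ideal.span_le]
    rintro _ ⟨_, rfl, _, ⟨j, rfl⟩, rfl⟩
    by_cases hj : j ∈ s
    · exact Ideal.subset_span ⟨j, hj, rfl⟩
    · simp [hzero j hj]
  · rintro _ ⟨j, -, rfl⟩
    rw [hxm]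
    exact Ideal.mul_mem_mul (Ideal.mem_span_singleton_self x₀) (hspan ▸ Ideal.subset_span ⟨j, rfl⟩)

theorem sq_maximalIdeal_eq_span_insert_zero {n m : ℕ} (hn0 : 0 < n) {x : Fin n → R}
    (hspan : Ideal.span (Set.range x) = maximalIdeal R)
    (hxm : maximalIdeal R ^ 2 = Ideal.span {x ⟨0, hn0⟩} * maximalIdeal R)
    (hzero : ∀ j : Fin n, m ≤ (j : ℕ) → x ⟨0, hn0⟩ * x j = 0) :
    maximalIdeal R ^ 2 = Ideal.span ((x ⟨0, hn0⟩ * x ·) ''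
      ↑(insert ⟨0, hn0⟩ {i : Fin n | 0 < (i : ℕ) ∧ (i : ℕ) < m}.toFinset)) := by
  refine sq_maximalIdeal_eq_span_image hspan hxm fun j hj => hzero j ?_
  simp only [Finset.coe_insert, Set.coe_toFinset, Set.mem_insert_iff, Set.mem_ofPred_eq,
    Fin.ext_iff, not_or, not_and, not_lt] at hj
  omega

theorem card_insert_zero_le {n m : ℕ} (hn0 : 0 < n) (hm : 0 < m) :
    (insert (⟨0, hn0⟩ : Fin n) {i : Fin n | 0 < (i : ℕ) ∧ (i : ℕ) < m}.toFinset).card ≤ m := by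
  calc _ ≤ (Finset.range m).card := by
        refine Finset.card_le_card_of_injOn Fin.val (fun i hi => ?_) Fin.val_injective.injOn
        simp only [Finset.coe_insert, Set.coe_toFinset, Set.mem_insert_iff] at hi
        rcases hi with rfl | hi
        · simpa using hm
        · simpa using hi.2
    _ = m := Finset.card_range m

theorem maximalIdeal_mul_mul_annihilator_inf_eq_bot {y : R} {A : Ideal R}
    (hA : A ≤ maximalIdeal R) (hxm : maximalIdeal R ^ 2 = Ideal.span {y} * maximalIdeal R) :
    maximalIdeal R * A * ((Ideal.span {y}).annihilator ⊓ maximalIdeal R ^ 2) = ⊥ := by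
  have hsq : maximalIdeal R ^ 2 * (Ideal.span {y}).annihilator = ⊥ := by
    rw [hxm, mul_right_comm, mul_annihilator, Submodule.bot_mul]
  refine eq_bot_iff.mpr (le_of_le_of_eq ?_ hsq)
  exact Ideal.mul_mono (sq (maximalIdeal R) ▸ Ideal.mul_mono_right hA) inf_le_left

theorem mem_colon_of_forall_mul_eq_zero [IsArtinianRing R] {z y : R}
    (hsoc : (maximalIdeal R).annihilator = Ideal.span {z})
    (hxm : maximalIdeal R ^ 2 = Ideal.span {y} * maximalIdeal R) (hy : y * y ≠ 0) {a : R}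
    (ha : ∀ b ∈ (Ideal.span {y}).annihilator ⊓ maximalIdeal R ^ 2, a * b = 0) :
    a ∈ (Ideal.span {y * y}).colon {y} := by
  rw [mem_colon_singleton, ← Ideal.annihilator_annihilator_eq hsoc (Ideal.span {y * y}),
    mem_annihilator]
  intro r hr
  have hryy : r * (y * y) = 0 := by simpa using (mem_annihilator_span_singleton _ _).mp hr
  have hrm : r ∈ maximalIdeal R := by
    by_contra hr'
    exact hy ((notMem_maximalIdeal.mp hr').mul_right_eq_zero.mp hryy)
  have hyr : y * r ∈ (Ideal.span {y}).annihilator ⊓ maximalIdeal R ^ 2 := by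
    refine ⟨(mem_annihilator_span_singleton _ _).mpr ?_, ?_⟩
    · rw [smul_eq_mul]
      linear_combination hryy
    · rw [hxm]
      exact Ideal.mul_mem_mul (Ideal.mem_span_singleton_self y) hrm
  rw [smul_eq_mul, smul_eq_mul]
  linear_combination ha _ hyr

theorem maximalIdeal_mul_ne_bot {ι : Type*} {x : ι → R} {s : Finset ι} {B J : Ideal R}
    (hx : ∀ i, x i ∈ maximalIdeal R) (hs : s.Nonempty)
    (hcoeff : ∀ d : ι → R, ∑ i ∈ s, d i * x i ∈ J → ∀ i ∈ s, d i ∈ maximalIdeal R)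
    (hdual : ∀ a, (∀ b ∈ B, a * b = 0) → a ∈ J) :
    maximalIdeal R * B ≠ ⊥ := by
  classical
  intro hmB
  obtain ⟨i, hi⟩ := hs
  have := hcoeff (Pi.single i 1) ?_ i hi
  · simp at this
  · simp only [Pi.single_apply, ite_mul, one_mul, zero_mul, Finset.sum_ite_eq', hi, if_true]
    refine hdual _ fun b hb => ?_
    simpa [hmB] using Ideal.mul_mem_mul (hx i) hb

theorem mem_annihilator_maximalIdeal_of_mul_eq_zero {n m : ℕ} (hn0 : 0 < n) {x : Fin n → R}
    (hspan : Ideal.span (Set.range x) = maximalIdeal R)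
    (hxm : maximalIdeal R ^ 2 = Ideal.span {x ⟨0, hn0⟩} * maximalIdeal R)
    (hzero : ∀ j : Fin n, m ≤ (j : ℕ) → x ⟨0, hn0⟩ * x j = 0) {b : R}
    (hb : b ∈ (Ideal.span {x ⟨0, hn0⟩}).annihilator ⊓ maximalIdeal R ^ 2)
    (hbA : ∀ i : Fin n, 0 < (i : ℕ) → (i : ℕ) < m → b * x i = 0) :
    b ∈ (maximalIdeal R).annihilator := by
  rw [← hspan, mem_annihilator_span]
  rintro ⟨_, i, rfl⟩
  rw [smul_eq_mul]
  rcases Nat.eq_zero_or_pos (i : ℕ) with hi | hi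
  · rw [show i = ⟨0, hn0⟩ from Fin.ext hi]
    simpa using (mem_annihilator_span_singleton _ _).mp hb.1
  by_cases him : (i : ℕ) < m
  · exact hbA i hi him
  · have hb0 : b ∈ Ideal.span {x ⟨0, hn0⟩} := by
      have hb2 := hb.2
      rw [hxm] at hb2
      exact Ideal.mul_le_left hb2
    obtain ⟨e, rfl⟩ := Ideal.mem_span_singleton'.mp hb0
    rw [mul_assoc, hzero i (not_lt.mp him), mul_zero]

end Pairing

theorem stmt10_general {R : Type*} [CommRing R] [IsArtinianRing R] [IsLocalRing R]
    (hGor : ∃ z : R, z ≠ 0 ∧ Submodule.colon ⊥ (maximalIdeal R : Set R) = Ideal.span {z})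
    (n m : ℕ) (hn0 : 0 < n) (hm2 : 2 ≤ m)
    (hm : mu ((maximalIdeal R) ^ 2) = m)
    (x : Fin n → R) (hspan : Ideal.span (Set.range x) = maximalIdeal R)
    (hxm : (maximalIdeal R) ^ 2 = Ideal.span {x ⟨0, hn0⟩} * maximalIdeal R)
    (hzero : ∀ j : Fin n, m ≤ (j : ℕ) → x ⟨0, hn0⟩ * x j = 0) :
    Ideal.span (x '' {i : Fin n | 0 < (i : ℕ) ∧ (i : ℕ) < m}) *
        (Submodule.colon ⊥ (Ideal.span {x ⟨0, hn0⟩} : Set R) ⊓ (maximalIdeal R) ^ 2)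
      ≤ Submodule.colon ⊥ (maximalIdeal R : Set R) ∧
    (maximalIdeal R * Ideal.span (x '' {i : Fin n | 0 < (i : ℕ) ∧ (i : ℕ) < m})) *
        (Submodule.colon ⊥ (Ideal.span {x ⟨0, hn0⟩} : Set R) ⊓ (maximalIdeal R) ^ 2) = ⊥ ∧
    Ideal.span (x '' {i : Fin n | 0 < (i : ℕ) ∧ (i : ℕ) < m}) *
        (maximalIdeal R *
          (Submodule.colon ⊥ (Ideal.span {x ⟨0, hn0⟩} : Set R) ⊓ (maximalIdeal R) ^ 2)) = ⊥ ∧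
    (∀ a ∈ Ideal.span (x '' {i : Fin n | 0 < (i : ℕ) ∧ (i : ℕ) < m}),
      (∀ b ∈ Submodule.colon ⊥ (Ideal.span {x ⟨0, hn0⟩} : Set R) ⊓ (maximalIdeal R) ^ 2,
        a * b = 0) →
      a ∈ maximalIdeal R * Ideal.span (x '' {i : Fin n | 0 < (i : ℕ) ∧ (i : ℕ) < m})) ∧
    (∀ b ∈ Submodule.colon ⊥ (Ideal.span {x ⟨0, hn0⟩} : Set R) ⊓ (maximalIdeal R) ^ 2,
      (∀ a ∈ Ideal.span (x '' {i : Fin n | 0 < (i : ℕ) ∧ (i : ℕ) < m}), a * b = 0) →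
      b ∈ maximalIdeal R *
        (Submodule.colon ⊥ (Ideal.span {x ⟨0, hn0⟩} : Set R) ⊓ (maximalIdeal R) ^ 2)) := by
  classical
  obtain ⟨z, -, hsoc⟩ := hGor
  simp only [bot_colon] at hsoc ⊢
  rw [← Set.coe_toFinset {i : Fin n | 0 < (i : ℕ) ∧ (i : ℕ) < m}]
  set S := {i : Fin n | 0 < (i : ℕ) ∧ (i : ℕ) < m}.toFinset
  set x₀ := x ⟨0, hn0⟩
  have h0S : (⟨0, hn0⟩ : Fin n) ∉ S := by simp [S]
  have hgens := sq_maximalIdeal_eq_span_insert_zero hn0 hspan hxm hzero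
  have hcard : (insert ⟨0, hn0⟩ S).card = m :=
    le_antisymm (card_insert_zero_le hn0 (by omega)) (hm ▸ hgens ▸ mu_span_image_le_card _ _)
  have hmin := (hcard.trans (hgens ▸ hm).symm).le
  have hcoeff : ∀ d : Fin n → R, ∑ i ∈ S, d i * x i ∈ (Ideal.span {x₀ * x₀}).colon {x₀} →
      ∀ i ∈ S, d i ∈ maximalIdeal R := fun d hd i hi =>
    coeff_mem_maximalIdeal_of_sum_mem_colon h0S hmin hd hi
  have hdual : ∀ a, (∀ b ∈ (Ideal.span {x₀}).annihilator ⊓ maximalIdeal R ^ 2, a * b = 0) →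
      a ∈ (Ideal.span {x₀ * x₀}).colon {x₀} := fun a => mem_colon_of_forall_mul_eq_zero hsoc hxm
    (ne_zero_of_card_le_mu hmin (Finset.mem_insert_self _ _))
  have hx : ∀ i, x i ∈ maximalIdeal R := fun i => hspan ▸ Ideal.subset_span ⟨i, rfl⟩
  have hAB := maximalIdeal_mul_mul_annihilator_inf_eq_bot
    (hspan ▸ Ideal.span_mono (Set.image_subset_range x S)) hxm
  have hS : S.Nonempty := by
    rw [Finset.card_insert_of_notMem h0S] at hcard
    exact Finset.card_pos.mp (by omega)
  refine ⟨?_, hAB, by rw [mul_left_comm, ← mul_assoc, hAB], fun a ha haB =>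
    Ideal.mem_mul_span_of_forall_coeff_mem hcoeff ha (hdual a haB), fun b hb hbA => ?_⟩
  · rw [le_annihilator_iff, Ideal.smul_eq_mul, mul_comm, ← mul_assoc, hAB]
  refine Ideal.annihilator_maximalIdeal_le hsoc (maximalIdeal_mul_ne_bot hx hS hcoeff hdual)
    (mem_annihilator_maximalIdeal_of_mul_eq_zero hn0 hspan hxm hzero hb fun i hi him => ?_)
  rw [mul_comm]
  exact hbA _ (Ideal.subset_span ⟨i, by simp [S, hi, him], rfl⟩)

/-- Let `(R, m, k)` be an Artinian Gorenstein local ring with `m^2 = x₁·m`,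
`µ(m^2) = m ≥ 2`, embedding dimension `n`, and a minimal generating set
`x₁ = x 0, x 1, …, x (n-1)` of `m` with `x₁ · x j = 0` for `m ≤ j ≤ n-1`.  Writing
`A = (x 1, …, x (m-1))` and `B = (0 :_R x₁) ∩ m^2`, the pairing
`A/mA × B/mB → soc(R)` induced by multiplication is well defined
(`A·B ⊆ soc(R)`, `(mA)·B = 0`, `A·(mB) = 0`) and non-degenerate (an element of `A` pairing
to zero with all of `B` lies in `mA`, and symmetrically). -/
theorem stmt10 {R : Type*} [CommRing R] [IsArtinianRing R] [IsLocalRing R]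
    (hGor : ∃ z : R, z ≠ 0 ∧ Submodule.colon ⊥ (maximalIdeal R : Set R) = Ideal.span {z})
    (n m : ℕ) (hn0 : 0 < n) (hm2 : 2 ≤ m)
    (hn : mu (maximalIdeal R) = n) (hm : mu ((maximalIdeal R) ^ 2) = m)
    (x : Fin n → R) (hspan : Ideal.span (Set.range x) = maximalIdeal R)
    (hxm : (maximalIdeal R) ^ 2 = Ideal.span {x ⟨0, hn0⟩} * maximalIdeal R)
    (hzero : ∀ j : Fin n, m ≤ (j : ℕ) → x ⟨0, hn0⟩ * x j = 0) :
    Ideal.span (x '' {i : Fin n | 0 < (i : ℕ) ∧ (i : ℕ) < m}) *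
        (Submodule.colon ⊥ (Ideal.span {x ⟨0, hn0⟩} : Set R) ⊓ (maximalIdeal R) ^ 2)
      ≤ Submodule.colon ⊥ (maximalIdeal R : Set R) ∧
    (maximalIdeal R * Ideal.span (x '' {i : Fin n | 0 < (i : ℕ) ∧ (i : ℕ) < m})) *
        (Submodule.colon ⊥ (Ideal.span {x ⟨0, hn0⟩} : Set R) ⊓ (maximalIdeal R) ^ 2) = ⊥ ∧
    Ideal.span (x '' {i : Fin n | 0 < (i : ℕ) ∧ (i : ℕ) < m}) *
        (maximalIdeal R *
          (Submodule.colon ⊥ (Ideal.span {x ⟨0, hn0⟩} : Set R) ⊓ (maximalIdeal R) ^ 2)) = ⊥ ∧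
    (∀ a ∈ Ideal.span (x '' {i : Fin n | 0 < (i : ℕ) ∧ (i : ℕ) < m}),
      (∀ b ∈ Submodule.colon ⊥ (Ideal.span {x ⟨0, hn0⟩} : Set R) ⊓ (maximalIdeal R) ^ 2,
        a * b = 0) →
      a ∈ maximalIdeal R * Ideal.span (x '' {i : Fin n | 0 < (i : ℕ) ∧ (i : ℕ) < m})) ∧
    (∀ b ∈ Submodule.colon ⊥ (Ideal.span {x ⟨0, hn0⟩} : Set R) ⊓ (maximalIdeal R) ^ 2,
      (∀ a ∈ Ideal.span (x '' {i : Fin n | 0 < (i : ℕ) ∧ (i : ℕ) < m}), a * b = 0) →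
      b ∈ maximalIdeal R *
        (Submodule.colon ⊥ (Ideal.span {x ⟨0, hn0⟩} : Set R) ⊓ (maximalIdeal R) ^ 2)) :=
  stmt10_general hGor n m hn0 hm2 hm x hspan hxm hzero
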